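/- The sequence L_n/n is non-increasing for n ≥ 3; that is, for every integer n ≥ 4, L_n/n ≤ L_{n−1}/(n−1). -/

import Mathlib

/-!
Clearing denominators, `(n - 1) L_n - n L_{n-1} = -∑_{k ≤ n} (-1)^k (k - 1) 2^(k-1) / k!`.
The terms `(k - 1) 2^(k-1) / k!` decrease from `k = 3` on, so beyond `k = 4` the sum is an
alternating series with decreasing terms: it never drops below its value `2/3` at `n = 4`
by more than the first tail term `8/15`, and hence stays positive.
-/

/-- `Lseg n = Σ_{k=1}^{n} (−1)^{k+1} (2^{k−1}/k!) (n−k+1)`, the expected number of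
transmissions in one slot from a fully occupied segment of `n` nodes (so `Lseg 0 = 0`). -/
noncomputable def Lseg (n : ℕ) : ℝ :=
  ∑ k ∈ Finset.Icc 1 n,
    (-1 : ℝ) ^ (k + 1) * (2 ^ (k - 1) / (Nat.factorial k : ℝ)) * ((n : ℝ) - (k : ℝ) + 1)

open Finset Nat

theorem alternating_sum_range_nonneg_and_le {E : Type*} [Ring E] [PartialOrder E]
    [IsOrderedRing E] {f : ℕ → E} (hfa : Antitone f) (hf : ∀ i, 0 ≤ f i) (n : ℕ) :
    0 ≤ ∑ i ∈ range n, (-1) ^ i * f i ∧ ∑ i ∈ range n, (-1) ^ i * f i ≤ f 0 := by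
  induction n generalizing f with
  | zero => simpa using hf 0
  | succ n ih =>
    obtain ⟨h0, h1⟩ := ih (fun a b h ↦ hfa (Nat.add_le_add_right h 1)) (fun i ↦ hf (i + 1))
    have hsucc : ∑ i ∈ range (n + 1), (-1) ^ i * f i
        = f 0 - ∑ i ∈ range n, (-1) ^ i * f (i + 1) := by
      simp only [sum_range_succ', pow_succ, mul_neg_one, neg_mul, sum_neg_distrib, pow_zero,
        one_mul]
      abel
    rw [hsucc]
    exact ⟨sub_nonneg.2 (h1.trans (hfa (Nat.zero_le 1))), sub_le_self _ h0⟩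

noncomputable def slopeTerm (k : ℕ) : ℝ := ((k : ℝ) - 1) * 2 ^ (k - 1) / k !

noncomputable def slopeSum (n : ℕ) : ℝ := ∑ k ∈ Icc 1 n, (-1) ^ k * slopeTerm k

theorem slopeTerm_nonneg {k : ℕ} (hk : 1 ≤ k) : 0 ≤ slopeTerm k := by
  have hk' : (0 : ℝ) ≤ k - 1 := sub_nonneg.2 (by exact_mod_cast hk)
  unfold slopeTerm
  positivity

theorem slopeTerm_succ_le {k : ℕ} (hk : 3 ≤ k) : slopeTerm (k + 1) ≤ slopeTerm k := by
  obtain ⟨j, rfl⟩ : ∃ j, k = j + 1 := ⟨k - 1, by omega⟩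
  have hj : (2 : ℝ) ≤ j := by exact_mod_cast (show 2 ≤ j by omega)
  simp only [slopeTerm, Nat.add_sub_cancel, factorial_succ, cast_mul, pow_succ]
  push_cast
  rw [div_le_div_iff₀ (by positivity) (by positivity)]
  have hpos : (0 : ℝ) < 2 ^ j * j ! := by positivity
  nlinarith [mul_nonneg hpos.le (show 0 ≤ ((j : ℝ) + 1) * (j * j - 2) by nlinarith)]

theorem mul_Lseg_succ_sub (m : ℕ) :
    m * Lseg (m + 1) - (m + 1) * Lseg m = -slopeSum (m + 1) := by
  have hLm : Lseg m = ∑ k ∈ Icc 1 (m + 1),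
      (-1 : ℝ) ^ (k + 1) * (2 ^ (k - 1) / k !) * ((m : ℝ) - k + 1) := by
    rw [sum_Icc_succ_top (by omega)]
    simp [Lseg]
  rw [hLm, Lseg, slopeSum, mul_sum, mul_sum, ← sum_sub_distrib, ← sum_neg_distrib]
  refine sum_congr rfl fun k _ ↦ ?_
  simp only [slopeTerm, pow_succ]
  push_cast
  ring

theorem slopeSum_four : slopeSum 4 = 2 / 3 := by
  norm_num [slopeSum, slopeTerm, sum_Icc_succ_top, factorial]

theorem slopeTerm_five : slopeTerm 5 = 8 / 15 := by
  norm_num [slopeTerm, factorial]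

theorem slopeSum_eq_sub {n : ℕ} (hn : 4 ≤ n) :
    slopeSum n = slopeSum 4 - ∑ i ∈ range (n - 4), (-1) ^ i * slopeTerm (i + 5) := by
  rw [slopeSum, slopeSum, ← Ico_add_one_right_eq_Icc, ← Ico_add_one_right_eq_Icc,
    ← sum_Ico_consecutive _ (by norm_num : 1 ≤ 4 + 1) (by omega : 4 + 1 ≤ n + 1),
    sum_Ico_eq_sum_range _ (4 + 1), sub_eq_add_neg, ← sum_neg_distrib]
  congr 1
  refine sum_congr rfl fun i _ ↦ ?_
  rw [add_comm (4 + 1) i, pow_add]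
  norm_num

theorem slopeSum_nonneg {n : ℕ} (hn : 4 ≤ n) : 0 ≤ slopeSum n := by
  have htail := (alternating_sum_range_nonneg_and_le (f := fun i ↦ slopeTerm (i + 5))
    (antitone_nat_of_succ_le fun i ↦ slopeTerm_succ_le (by omega))
    (fun i ↦ slopeTerm_nonneg (by omega)) (n - 4)).2
  rw [zero_add, slopeTerm_five] at htail
  rw [slopeSum_eq_sub hn, slopeSum_four]
  linarith

theorem Lseg_div_nonincreasing (n : ℕ) (hn : 4 ≤ n) :
    Lseg n / (n : ℝ) ≤ Lseg (n - 1) / ((n : ℝ) - 1) := by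
  obtain ⟨m, rfl⟩ : ∃ m, n = m + 1 := ⟨n - 1, by omega⟩
  have hm : (3 : ℝ) ≤ m := by exact_mod_cast (show 3 ≤ m by omega)
  rw [Nat.add_sub_cancel, cast_succ, add_sub_cancel_right,
    div_le_div_iff₀ (by linarith) (by linarith)]
  have hslope := mul_Lseg_succ_sub m
  have hsum := slopeSum_nonneg (show 4 ≤ m + 1 by omega)
  linarith
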